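/- Let G be a simple graph and let C be a cycle of G containing consecutive vertices w, v, x, y, z, u. Let a and c be two distinct vertices of G not on C such that a is adjacent to v and z, and c is adjacent to x and u. Then G contains a cycle of length |C| + 2 whose vertex set is V(C) ∪ {a, c}; the new cycle is obtained from C by replacing the path (w, v, x, y, z, u) with the path (w, v, a, z, y, x, c, u). -/

import Mathlib

/-!
Rotating and, if necessary, reversing `C`, write it as the path `v x y z u` followed by a path
`p` from `u` back to `v` that meets it only at its ends. Replacing `v x y z u` by `v a z y x c u`,
whose new vertices `a` and `c` lie off `C`, keeps the two pieces internally disjoint, so the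
result is again a cycle, and its length, vertices and edges are read off from the two pieces.
-/

namespace SimpleGraph.Walk

variable {V : Type*} {G : SimpleGraph V}

theorem IsPath.exists_eq_cons_of_mem_edges {u v w : V} {p : G.Walk u v} (hp : p.IsPath)
    (he : s(u, w) ∈ p.edges) : ∃ (h : G.Adj u w) (q : G.Walk w v), p = cons h q := by
  obtain rfl := hp.eq_snd_of_mem_edges he
  have hnil : ¬p.Nil := edges_eq_nil.not.mp (List.ne_nil_of_mem he)
  exact ⟨p.adj_snd hnil, p.tail, (p.cons_tail_eq hnil).symm⟩

theorem IsCycle.exists_cons_of_mem_edges {v u w : V} {c : G.Walk v v} (hc : c.IsCycle)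
    (he : s(u, w) ∈ c.edges) :
    ∃ (h : G.Adj u w) (p : G.Walk w u), (cons h p).IsCycle ∧ (cons h p).edges.Perm c.edges := by
  classical
  have hu : u ∈ c.support := c.fst_mem_support_of_mem_edges he
  have hrot := (c.rotate_edges u hu).perm
  suffices ∃ (h : G.Adj u w) (p : G.Walk w u),
      (cons h p).IsCycle ∧ (cons h p).edges.Perm (c.rotate u hu).edges from
    let ⟨h, p, hcyc, hperm⟩ := this; ⟨h, p, hcyc, hperm.trans hrot⟩
  have hd := hc.rotate hu
  have hed := hrot.mem_iff.mpr he
  generalize c.rotate u hu = d at hd hed ⊢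
  cases d with
  | nil => simp at hed
  | @cons _ b _ h p =>
    by_cases hwb : w = b
    · subst hwb
      exact ⟨h, p, hd, List.Perm.refl _⟩
    -- `s(u, w)` is then the closing edge of the cycle, so we traverse it backwards
    have hp : p.reverse.IsPath := ((cons_isCycle_iff p h).mp hd).1.reverse
    have he' : s(u, w) ∈ p.reverse.edges := by
      simpa [Sym2.eq_iff, hwb, h.ne] using hed
    obtain ⟨h', q, hq⟩ := hp.exists_eq_cons_of_mem_edges he'
    have hrev : cons h' (q.concat h.symm) = (cons h p).reverse := by
      rw [reverse_cons, hq, concat_eq_append]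
      rfl
    refine ⟨h', q.concat h.symm, hrev ▸ hd.reverse, ?_⟩
    rw [hrev, edges_reverse]
    exact List.reverse_perm _

theorem IsCycle.exists_append_of_edges_subset {v x y : V} {c : G.Walk v v} (hc : c.IsCycle)
    {q : G.Walk x y} (hq : q.IsPath) (hnil : ¬q.Nil) (hqc : q.edges ⊆ c.edges) :
    ∃ p : G.Walk y x, (q.append p).IsCycle ∧ (q.append p).edges.Perm c.edges := by
  induction q using concatRec with
  | Hnil => simp at hnil
  | @Hconcat x y' y q h ih =>
    by_cases hq' : q.Nil
    · obtain rfl := hq'.eq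
      obtain rfl := hq'.eq_nil
      obtain ⟨h', p, hcyc, hperm⟩ := hc.exists_cons_of_mem_edges
        (hqc (by simp : s(x, y) ∈ (nil.concat h).edges))
      exact ⟨p, by simpa [concat_eq_append] using hcyc, by simpa [concat_eq_append] using hperm⟩
    have hqy : y ∉ q.support := ((concat_isPath_iff h).mp hq).2
    obtain ⟨p', hcyc, hperm⟩ := ih ((concat_isPath_iff h).mp hq).1 hq'
      (fun e he => hqc (by simp [he] : e ∈ (q.concat h).edges))
    have he : s(y', y) ∈ p'.edges := by
      have := hperm.mem_iff.mpr (hqc (by simp : s(y', y) ∈ (q.concat h).edges))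
      rw [edges_append, List.mem_append] at this
      exact this.resolve_left fun he => hqy (q.snd_mem_support_of_mem_edges he)
    obtain ⟨h', p, rfl⟩ := (hcyc.isPath_of_append_right hq').exists_eq_cons_of_mem_edges he
    exact ⟨p, by rwa [concat_append], by rwa [concat_append]⟩

theorem support_subset_of_edges_subset {u v u' v' : V} {p : G.Walk u v} {p' : G.Walk u' v'}
    (hp : ¬p.Nil) (h : p.edges ⊆ p'.edges) : p.support ⊆ p'.support := fun t ht => by
  obtain ⟨e, he, hte⟩ := (mem_support_iff_exists_mem_edges_of_not_nil hp).mp ht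
  exact mem_support_iff_exists_mem_edges.mpr (.inr ⟨e, h he, hte⟩)

theorem IsCycle.isCycle_append_of_isPath {u v : V} {q q' : G.Walk v u} {p : G.Walk u v}
    (hc : (q.append p).IsCycle) (hq : ¬q.Nil) (hq' : q'.IsPath) (hlen : 1 < q'.length)
    (hsupp : ∀ t ∈ q'.support.tail, t ∈ q.support.tail ∨ t ∉ p.support) :
    (q'.append p).IsCycle := by
  have hdisj : q.support.tail.Disjoint p.support.tail := by
    have := hc.support_nodup
    rw [tail_support_append, List.nodup_append'] at this
    exact this.2.2
  refine hq'.isCycle_append (hc.isPath_of_append_right hq) (fun t ht ht' => ?_) (Or.inl hlen)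
  rcases hsupp t ht with h | h
  · exact hdisj h ht'
  · exact h (List.mem_of_mem_tail ht')

theorem IsCycle.exists_isCycle_replace {v₀ u v : V} {c : G.Walk v₀ v₀} (hc : c.IsCycle)
    {q q' : G.Walk v u} (hq : q.IsPath) (hnil : ¬q.Nil) (hqc : q.edges ⊆ c.edges)
    (hq' : q'.IsPath) (hlen : 1 < q'.length)
    (hsupp : ∀ t ∈ q'.support.tail, t ∈ q.support.tail ∨ t ∉ c.support)
    (hqq' : q.support ⊆ q'.support) :
    ∃ c' : G.Walk v v, c'.IsCycle ∧ c'.length + q.length = c.length + q'.length ∧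
      (∀ t, t ∈ c'.support ↔ t ∈ c.support ∨ t ∈ q'.support) ∧
      {e | e ∈ c'.edges} = ({e | e ∈ c.edges} \ {e | e ∈ q.edges}) ∪ {e | e ∈ q'.edges} := by
  obtain ⟨p, hcyc, hperm⟩ := hc.exists_append_of_edges_subset hq hnil hqc
  have hcp : ∀ t, t ∈ c.support ↔ t ∈ q.support ∨ t ∈ p.support := fun t => by
    rw [← mem_support_append_iff]
    exact ⟨(support_subset_of_edges_subset hc.not_nil hperm.symm.subset ·),
      (support_subset_of_edges_subset hcyc.not_nil hperm.subset ·)⟩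
  have hdisj := ((isTrail_append q p).mp hcyc.isTrail).2.2
  refine ⟨q'.append p, ?_, ?_, fun t => ?_, ?_⟩
  · refine hcyc.isCycle_append_of_isPath hnil hq' hlen fun t ht => ?_
    exact (hsupp t ht).imp_right fun h hp => h ((hcp t).mpr (.inr hp))
  · have := hperm.length_eq
    simp only [length_edges, length_append] at this ⊢
    omega
  · rw [mem_support_append_iff, hcp]
    have := @hqq' t
    tauto
  · ext e
    simp only [Set.mem_ofPred_eq, Set.mem_union, Set.mem_sdiff, edges_append, List.mem_append,
      ← hperm.mem_iff]
    have := @hdisj e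
    tauto

end SimpleGraph.Walk

open SimpleGraph Walk

/-- Case 3b replacement: if `w, v, x, y, z, u` are consecutive vertices of a cycle `C` and
`a ≠ c` are vertices off `C` with `a` adjacent to `v, z` and `c` adjacent to `x, u`,
then `G` has a cycle of length `|C| + 2` on vertex set `V(C) ∪ {a, c}`, obtained from `C`
by replacing the path `(w, v, x, y, z, u)` with the path `(w, v, a, z, y, x, c, u)`. -/
theorem case3b_replacement {V : Type*} (G : SimpleGraph V) {v0 : V}
    (C : G.Walk v0 v0) (hC : C.IsCycle) (w v x y z u a c : V)
    (hdist : [w, v, x, y, z, u].Pairwise (· ≠ ·))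
    (hwv : s(w, v) ∈ C.edges) (hvx : s(v, x) ∈ C.edges) (hxy : s(x, y) ∈ C.edges)
    (hyz : s(y, z) ∈ C.edges) (hzu : s(z, u) ∈ C.edges)
    (hac : a ≠ c) (ha : a ∉ C.support) (hc : c ∉ C.support)
    (hav : G.Adj a v) (haz : G.Adj a z) (hcx : G.Adj c x) (hcu : G.Adj c u) :
    ∃ (w0 : V) (C' : G.Walk w0 w0), C'.IsCycle ∧ C'.length = C.length + 2 ∧
      (∀ t, t ∈ C'.support ↔ t ∈ C.support ∨ t = a ∨ t = c) ∧
      {e | e ∈ C'.edges} =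
        ({e | e ∈ C.edges} \ {s(w, v), s(v, x), s(x, y), s(y, z), s(z, u)}) ∪
          {s(w, v), s(v, a), s(a, z), s(z, y), s(y, x), s(x, c), s(c, u)} := by
  simp only [List.pairwise_cons, List.mem_cons, List.not_mem_nil,
    forall_eq_or_imp, forall_eq, List.Pairwise.nil, and_true, IsEmpty.forall_iff,
    implies_true, or_false] at hdist
  let q : G.Walk v u := cons (C.adj_of_mem_edges hvx) (cons (C.adj_of_mem_edges hxy)
    (cons (C.adj_of_mem_edges hyz) (cons (C.adj_of_mem_edges hzu) nil)))
  let q' : G.Walk v u := cons hav.symm (cons haz (cons (C.adj_of_mem_edges hyz).symm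
    (cons (C.adj_of_mem_edges hxy).symm (cons hcx.symm (cons hcu nil)))))
  have hqE : q.edges ⊆ C.edges := by simp [q, List.subset_def, *]
  have hqS : q.support ⊆ C.support := support_subset_of_edges_subset (by simp [q]) hqE
  have haq : a ∉ q.support := fun h => ha (hqS h)
  have hcq : c ∉ q.support := fun h => hc (hqS h)
  simp only [q, support_cons, support_nil, List.mem_cons, List.not_mem_nil, or_false,
    not_or] at haq hcq
  obtain ⟨C', hC', hlen, hsupp, hedges⟩ := hC.exists_isCycle_replace (q := q) (q' := q')
    (by simp [q]; grind) (by simp [q]) hqE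
    (by simp [q']; grind) (by simp [q']) (by simp [q, q', ha, hc])
    (by simp [q, q', List.subset_def])
  refine ⟨v, C', hC', by simpa [q, q'] using hlen, fun t => ?_, ?_⟩
  · have := @hqS t
    rw [hsupp]
    simp [q, q'] at this ⊢
    tauto
  · rw [hedges]
    ext e
    by_cases he : e = s(w, v)
    · subst he
      simp [q, hwv, hdist]
    simp only [Set.mem_union, Set.mem_sdiff, Set.mem_ofPred_eq, Set.mem_insert_iff,
      Set.mem_singleton_iff, q, q', edges_cons, edges_nil, List.mem_cons, List.not_mem_nil,
      or_false, he, false_or]
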